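/- Let J be an invertible linear map on a real inner product space, r a vector, and let δq = J⁻¹ r be the Newton correction. For a known root q₀, define the deflated residual D(q)·r(q) where D(q) = (1/‖q−q₀‖^p + a)·I with p > 0, a ≥ 0, and ‖q−q₀‖ ≠ 0. Then the Newton correction for the deflated system at q equals τ·δq, where the scalar τ = (1 + a‖q−q₀‖^p) / (1 + a‖q−q₀‖^p − p‖q−q₀‖^{−2}⟨q−q₀, δq⟩), provided the denominator is nonzero. That is, deflation rescales the undeflated Newton step by a scalar factor. -/

import Mathlib

open RealInnerProductSpace

/-! The deflated Jacobian is `m • J` plus the rank-one term `v ↦ Dm(v) • r`, and `r = J δq`, so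
the deflated step is a multiple `τ • δq`; the multiple is fixed by the scalar equation
`τ * (m + Dm δq) = m`, which multiplied through by `‖q - q₀‖ ^ p` is the stated formula. -/

theorem rankOne_perturbation_apply_smul_of_apply_eq {R E F : Type*} [CommSemiring R]
    [AddCommMonoid E] [Module R E] [AddCommMonoid F] [Module R F]
    (J : E →ₗ[R] F) (ℓ : E →ₗ[R] R) (m τ : R) {δ : E} {r : F} (hδ : J δ = r)
    (hτ : τ * (m + ℓ δ) = m) :
    ℓ (τ • δ) • r + m • J (τ • δ) = m • r := by
  rw [map_smul, map_smul, hδ, smul_eq_mul, smul_smul, ← add_smul]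
  nth_rw 2 [← hτ]
  congr 1
  ring

theorem rpow_neg_mul_one_add_mul_rpow {n : ℝ} (hn : 0 < n) (p a : ℝ) :
    n ^ (-p) * (1 + a * n ^ p) = n ^ (-p) + a := by
  rw [mul_one_add, mul_left_comm, ← Real.rpow_add hn, neg_add_cancel, Real.rpow_zero, mul_one]

theorem rpow_neg_mul_one_add_mul_rpow_sub {n : ℝ} (hn : 0 < n) (p a c : ℝ) :
    n ^ (-p) * (1 + a * n ^ p - p * n ^ (-2 : ℝ) * c)
      = n ^ (-p) + a + -p * n ^ (-p - 2) * c := by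
  rw [sub_eq_add_neg (-p), Real.rpow_add hn, mul_sub, rpow_neg_mul_one_add_mul_rpow hn]
  ring

theorem deflated_newton_step_is_scaled_general
    {E : Type*} [NormedAddCommGroup E] [InnerProductSpace ℝ E]
    (J : E ≃L[ℝ] E) (r q q₀ : E) (p a : ℝ)
    (hq : ‖q - q₀‖ ≠ 0)
    (δq : E) (hδq : δq = J.symm r)
    (τ : ℝ)
    (hτ : τ = (1 + a * ‖q - q₀‖ ^ p) /
        (1 + a * ‖q - q₀‖ ^ p - p * ‖q - q₀‖ ^ (-2 : ℝ) * ⟪q - q₀, δq⟫))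
    (hden : 1 + a * ‖q - q₀‖ ^ p - p * ‖q - q₀‖ ^ (-2 : ℝ) * ⟪q - q₀, δq⟫ ≠ 0) :
    (-p * ‖q - q₀‖ ^ (-p - 2) * ⟪q - q₀, τ • δq⟫) • r
      + (‖q - q₀‖ ^ (-p) + a) • (J (τ • δq))
      = (‖q - q₀‖ ^ (-p) + a) • r := by
  have hn : 0 < ‖q - q₀‖ := (norm_nonneg _).lt_of_ne' hq
  have hJ : J δq = r := by rw [hδq, J.apply_symm_apply]
  have hτ' : τ * (‖q - q₀‖ ^ (-p) + a + -p * ‖q - q₀‖ ^ (-p - 2) * ⟪q - q₀, δq⟫)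
      = ‖q - q₀‖ ^ (-p) + a := by
    rw [← rpow_neg_mul_one_add_mul_rpow_sub hn, mul_left_comm, hτ, div_mul_cancel₀ _ hden,
      rpow_neg_mul_one_add_mul_rpow hn]
  exact rankOne_perturbation_apply_smul_of_apply_eq (J : E →ₗ[ℝ] E)
    ((-p * ‖q - q₀‖ ^ (-p - 2)) • innerₛₗ ℝ (q - q₀)) _ τ hJ hτ'

/-- Deflation rescales the undeflated Newton step by a scalar factor.

Let `J` be an invertible linear map on a real inner product space, `r` the residual
vector and `δq = J⁻¹ r` the Newton correction.  For a known root `q₀`, the deflated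
residual is `m(q) • r(q)` with scalar deflation factor `m(q) = ‖q − q₀‖⁻ᵖ + a`
(`p > 0`, `a ≥ 0`, `‖q − q₀‖ ≠ 0`), whose derivative in direction `v` is
`−p ‖q − q₀‖^(−p−2) ⟪q − q₀, v⟫`.  Then the deflated Newton step, i.e. the solution
`δq'` of `Dm(q)(δq') • r + m(q) • J δq' = m(q) • r`, equals `τ • δq` with
`τ = (1 + a‖q−q₀‖ᵖ) / (1 + a‖q−q₀‖ᵖ − p‖q−q₀‖⁻² ⟪q−q₀, δq⟫)`, provided the
denominator is nonzero. -/
theorem deflated_newton_step_is_scaled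
    {E : Type*} [NormedAddCommGroup E] [InnerProductSpace ℝ E]
    (J : E ≃L[ℝ] E) (r q q₀ : E) (p a : ℝ)
    (hp : 0 < p) (ha : 0 ≤ a) (hq : ‖q - q₀‖ ≠ 0)
    (δq : E) (hδq : δq = J.symm r)
    (τ : ℝ)
    (hτ : τ = (1 + a * ‖q - q₀‖ ^ p) /
        (1 + a * ‖q - q₀‖ ^ p - p * ‖q - q₀‖ ^ (-2 : ℝ) * ⟪q - q₀, δq⟫))
    (hden : 1 + a * ‖q - q₀‖ ^ p - p * ‖q - q₀‖ ^ (-2 : ℝ) * ⟪q - q₀, δq⟫ ≠ 0) :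
    (-p * ‖q - q₀‖ ^ (-p - 2) * ⟪q - q₀, τ • δq⟫) • r
      + (‖q - q₀‖ ^ (-p) + a) • (J (τ • δq))
      = (‖q - q₀‖ ^ (-p) + a) • r :=
  deflated_newton_step_is_scaled_general J r q q₀ p a hq δq hδq τ hτ hden
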